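/- (Smash product relation for M₂.) In the depth-2 Jones tower setup, let b ∈ B and let (b₁⁽ⁱ⁾, b₂⁽ⁱ⁾)_{i=1,…,m} be any finite family of pairs of elements of B satisfying ∑ᵢ F(a e₂ e₁ b₁⁽ⁱ⁾) F(a' e₂ e₁ b₂⁽ⁱ⁾) = λ² F(a a' e₂ e₁ b) for all a, a' ∈ A (a representative of the comultiplication Δ(b) determined by the pairing ⟨a,b⟩ = λ⁻²F(a e₂ e₁ b)). Then for every y ∈ M₁: b y = λ⁻¹ ∑ᵢ E_{M₁}(b₁⁽ⁱ⁾ y e₂) · b₂⁽ⁱ⁾, i.e., b y = ∑ᵢ (b₁⁽ⁱ⁾ ⊳ y) b₂⁽ⁱ⁾ where b ⊳ y := λ⁻¹E_{M₁}(b y e₂). Together with the bijectivity of the multiplication map M₁ ⊗_k B → M₂, this says M₂ is isomorphic to the smash product M₁ # B via x ⊗ b ↦ xb. -/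

import Mathlib

open scoped TensorProduct

/-- The depth-2 Jones tower setup: a tower `N ⊆ M ⊆ M₁ ⊆ R` (with `R` playing the
role of `M₂`) of unital `k`-algebras, with conditional expectations, Jones idempotents,
braid-like relations and depth-2 orthogonal dual bases, as in the paper. -/
structure JonesTower (k : Type*) [Field k] (R : Type*) [Ring R] [Algebra k R] where
  N : Subalgebra k R
  M : Subalgebra k R
  M₁ : Subalgebra k R
  hNM : N ≤ M
  hMM₁ : M ≤ M₁
  lam : k
  hlam : lam ≠ 0
  E : R →ₗ[k] R
  EM : R →ₗ[k] R
  EM1 : R →ₗ[k] R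
  hE_mem : ∀ m ∈ M, E m ∈ N
  hEM_mem : ∀ x ∈ M₁, EM x ∈ M
  hEM1_mem : ∀ x : R, EM1 x ∈ M₁
  hE_one : E 1 = 1
  hEM_one : EM 1 = 1
  hEM1_one : EM1 1 = 1
  hE_bimod : ∀ n ∈ N, ∀ n' ∈ N, ∀ m ∈ M, E (n * m * n') = n * E m * n'
  hEM_bimod : ∀ m ∈ M, ∀ m' ∈ M, ∀ x ∈ M₁, EM (m * x * m') = m * EM x * m'
  hEM1_bimod : ∀ w ∈ M₁, ∀ w' ∈ M₁, ∀ x : R, EM1 (w * x * w') = w * EM1 x * w'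
  n₀ : ℕ
  xb : Fin n₀ → R
  yb : Fin n₀ → R
  hxb : ∀ i, xb i ∈ M
  hyb : ∀ i, yb i ∈ M
  hE_dual₁ : ∀ m ∈ M, ∑ i, E (m * xb i) * yb i = m
  hE_dual₂ : ∀ m ∈ M, ∑ i, xb i * E (yb i * m) = m
  hE_index : ∑ i, xb i * yb i = lam⁻¹ • (1 : R)
  hCMN : ∀ c ∈ M, (∀ n ∈ N, c * n = n * c) → ∃ μ : k, c = μ • (1 : R)
  hCM₁M : ∀ c ∈ M₁, (∀ m ∈ M, c * m = m * c) → ∃ μ : k, c = μ • (1 : R)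
  hCM₂M₁ : ∀ c : R, (∀ w ∈ M₁, c * w = w * c) → ∃ μ : k, c = μ • (1 : R)
  e₁ : R
  e₂ : R
  he₁ : e₁ ∈ M₁
  he₁N : ∀ n ∈ N, e₁ * n = n * e₁
  he₂M : ∀ m ∈ M, e₂ * m = m * e₂
  he₁me₁ : ∀ m ∈ M, e₁ * m * e₁ = E m * e₁
  he₂we₂ : ∀ w ∈ M₁, e₂ * w * e₂ = EM w * e₂
  hEMe₁ : EM e₁ = lam • (1 : R)
  hEM1e₂ : EM1 e₂ = lam • (1 : R)
  hspanM₁ : Subalgebra.toSubmodule M₁ =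
    Submodule.span k {x : R | ∃ m ∈ M, ∃ m' ∈ M, x = m * e₁ * m'}
  hspanM₂ : (⊤ : Submodule k R) =
    Submodule.span k {x : R | ∃ w ∈ M₁, ∃ w' ∈ M₁, x = w * e₂ * w'}
  hbraid₁ : e₁ * e₂ * e₁ = lam • e₁
  hbraid₂ : e₂ * e₁ * e₂ = lam • e₂
  r : ℕ
  zb : Fin r → R
  wb : Fin r → R
  hzbM₁ : ∀ i, zb i ∈ M₁
  hwbM₁ : ∀ i, wb i ∈ M₁
  hzbN : ∀ i, ∀ n ∈ N, zb i * n = n * zb i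
  hwbN : ∀ i, ∀ n ∈ N, wb i * n = n * wb i
  hzw_orth : ∀ i j, EM (wb i * zb j) = if i = j then (1 : R) else 0
  hzw_dual₁ : ∀ x ∈ M₁, ∑ i, EM (x * zb i) * wb i = x
  hzw_dual₂ : ∀ x ∈ M₁, ∑ i, zb i * EM (wb i * x) = x
  hzw_index : ∑ i, zb i * wb i = lam⁻¹ • (1 : R)
  s : ℕ
  ub : Fin s → R
  vb : Fin s → R
  hubM : ∀ i, ∀ m ∈ M, ub i * m = m * ub i
  hvbM : ∀ i, ∀ m ∈ M, vb i * m = m * vb i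
  huv_orth : ∀ i j, EM1 (vb i * ub j) = if i = j then (1 : R) else 0
  huv_dual₁ : ∀ x : R, ∑ i, EM1 (x * ub i) * vb i = x
  huv_dual₂ : ∀ x : R, ∑ i, ub i * EM1 (vb i * x) = x
  huv_index : ∑ i, ub i * vb i = lam⁻¹ • (1 : R)
  F : R →ₗ[k] k
  hF : ∀ c : R, (∀ n ∈ N, c * n = n * c) → algebraMap k R (F c) = EM (EM1 c)

variable {k : Type*} [Field k] {R : Type*} [Ring R] [Algebra k R]

/-- The second centralizer `A = C_{M₁}(N)`. -/
def JonesTower.A (T : JonesTower k R) : Subalgebra k R :=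
  T.M₁ ⊓ Subalgebra.centralizer k (T.N : Set R)

/-- The second centralizer `B = C_{M₂}(M)`. -/
def JonesTower.B (T : JonesTower k R) : Subalgebra k R :=
  Subalgebra.centralizer k (T.M : Set R)

/-- The big centralizer `C = C_{M₂}(N)`. -/
def JonesTower.C (T : JonesTower k R) : Subalgebra k R :=
  Subalgebra.centralizer k (T.N : Set R)

/-!
Write `φ(x) = E_{M₁}(e₂ e₁ x)`. The pull-down identity `e₂ E_{M₁}(e₂ x) = λ e₂ x` and the braid
relation give `e₁ e₂ φ(x) = λ² e₁ x`, so `e₁ b` can be traded for `λ⁻² e₁ e₂ φ(b)`, and for `a ∈ A`,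
`b ∈ B` the pairing becomes `F(a e₂ e₁ b) = E_M(a φ(b))`. Expanding in the orthogonal dual basis
`(zᵢ, wᵢ)` of `A`, the defining property of `Δ(b)` becomes the identity
`∑ᵢ φ(b₂⁽ⁱ⁾) E_M(φ(b₁⁽ⁱ⁾) g) = λ² φ(b) g` in `M₁`. Writing `b y = ∑ₚ xₚ e₁ b yₚ y` with the dual
basis of `E` and using `e₂ w e₂ = E_M(w) e₂`, the smash relation reduces to that identity.
The dual basis `(uⱼ, vⱼ)` of `E_{M₁}` in `B` gives the inverse `x ↦ ∑ⱼ E_{M₁}(x uⱼ) ⊗ vⱼ` of the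
multiplication map `M₁ ⊗ B → M₂`.
-/

namespace JonesTower

variable (T : JonesTower k R)

lemma mem_A_iff {x : R} : x ∈ T.A ↔ x ∈ T.M₁ ∧ ∀ n ∈ T.N, Commute n x := Iff.rfl

lemma commute_of_mem_B {x m : R} (hx : x ∈ T.B) (hm : m ∈ T.M) : Commute m x := hx m hm

lemma commute_e₁ {n : R} (hn : n ∈ T.N) : Commute T.e₁ n := T.he₁N n hn

lemma commute_e₂ {m : R} (hm : m ∈ T.M) : Commute T.e₂ m := T.he₂M m hm

lemma zb_mem_A (i : Fin T.r) : T.zb i ∈ T.A :=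
  T.mem_A_iff.2 ⟨T.hzbM₁ i, fun n hn => (T.hzbN i n hn).symm⟩

lemma wb_mem_A (i : Fin T.r) : T.wb i ∈ T.A :=
  T.mem_A_iff.2 ⟨T.hwbM₁ i, fun n hn => (T.hwbN i n hn).symm⟩

lemma ub_mem_B (j : Fin T.s) : T.ub j ∈ T.B := fun m hm => (T.hubM j m hm).symm

lemma vb_mem_B (j : Fin T.s) : T.vb j ∈ T.B := fun m hm => (T.hvbM j m hm).symm

section Expectations

lemma EM_mul_left {m x : R} (hm : m ∈ T.M) (hx : x ∈ T.M₁) : T.EM (m * x) = m * T.EM x := by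
  simpa using T.hEM_bimod m hm 1 T.M.one_mem x hx

lemma EM_mul_right {m x : R} (hm : m ∈ T.M) (hx : x ∈ T.M₁) : T.EM (x * m) = T.EM x * m := by
  simpa using T.hEM_bimod 1 T.M.one_mem m hm x hx

lemma EM1_mul_left {w : R} (hw : w ∈ T.M₁) (x : R) : T.EM1 (w * x) = w * T.EM1 x := by
  simpa using T.hEM1_bimod w hw 1 T.M₁.one_mem x

lemma EM1_mul_right {w : R} (hw : w ∈ T.M₁) (x : R) : T.EM1 (x * w) = T.EM1 x * w := by
  simpa using T.hEM1_bimod 1 T.M₁.one_mem w hw x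

lemma exists_EM_eq_algebraMap {α : R} (hα : α ∈ T.A) : ∃ μ : k, T.EM α = algebraMap k R μ := by
  obtain ⟨hα₁, hαN⟩ := T.mem_A_iff.1 hα
  obtain ⟨μ, hμ⟩ := T.hCMN _ (T.hEM_mem α hα₁) fun n hn => by
    rw [← T.EM_mul_right (T.hNM hn) hα₁, ← (hαN n hn).eq, T.EM_mul_left (T.hNM hn) hα₁]
  exact ⟨μ, by rw [hμ, Algebra.algebraMap_eq_smul_one]⟩

lemma exists_EM1_eq_algebraMap {β : R} (hβ : β ∈ T.B) : ∃ μ : k, T.EM1 β = algebraMap k R μ := by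
  obtain ⟨μ, hμ⟩ := T.hCM₁M _ (T.hEM1_mem β) fun m hm => by
    rw [← T.EM1_mul_right (T.hMM₁ hm), ← (T.commute_of_mem_B hβ hm).eq,
      T.EM1_mul_left (T.hMM₁ hm)]
  exact ⟨μ, by rw [hμ, Algebra.algebraMap_eq_smul_one]⟩

lemma commute_EM {α : R} (hα : α ∈ T.A) (x : R) : Commute (T.EM α) x := by
  obtain ⟨μ, hμ⟩ := T.exists_EM_eq_algebraMap hα
  exact hμ ▸ Algebra.commutes μ x

lemma EM_mem_A {α : R} (hα : α ∈ T.A) : T.EM α ∈ T.A :=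
  T.mem_A_iff.2 ⟨T.hMM₁ (T.hEM_mem α (T.mem_A_iff.1 hα).1), fun n _ => (T.commute_EM hα n).symm⟩

end Expectations

section JonesProjections

lemma sum_xb_mul_e₁_mul_yb : ∑ i, T.xb i * T.e₁ * T.yb i = 1 := by
  set S := ∑ i, T.xb i * T.e₁ * T.yb i
  have hgen : Set.EqOn (LinearMap.mulLeft k S) (LinearMap.id : R →ₗ[k] R)
      {x | ∃ m ∈ T.M, ∃ m' ∈ T.M, x = m * T.e₁ * m'} := by
    rintro _ ⟨m, hm, m', -, rfl⟩
    have hme₁ : S * (m * T.e₁) = m * T.e₁ := by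
      calc S * (m * T.e₁) = ∑ i, T.xb i * (T.e₁ * (T.yb i * m) * T.e₁) := by
            simp only [S, Finset.sum_mul, mul_assoc]
        _ = ∑ i, T.xb i * T.E (T.yb i * m) * T.e₁ := by
            simp only [fun i => T.he₁me₁ _ (mul_mem (T.hyb i) hm), mul_assoc]
        _ = m * T.e₁ := by rw [← Finset.sum_mul, T.hE_dual₂ m hm]
    simp only [LinearMap.mulLeft_apply, LinearMap.id_apply, ← mul_assoc, hme₁]
  have h1 : (1 : R) ∈ Submodule.span k {x | ∃ m ∈ T.M, ∃ m' ∈ T.M, x = m * T.e₁ * m'} := by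
    rw [← T.hspanM₁]
    exact T.M₁.one_mem
  simpa using LinearMap.eqOn_span' hgen h1

lemma e₂_mul_EM1_e₂_mul (x : R) : T.e₂ * T.EM1 (T.e₂ * x) = T.lam • (T.e₂ * x) := by
  suffices LinearMap.mulLeft k T.e₂ ∘ₗ T.EM1 ∘ₗ LinearMap.mulLeft k T.e₂ =
      T.lam • LinearMap.mulLeft k T.e₂ from LinearMap.congr_fun this x
  refine LinearMap.ext_on T.hspanM₂.symm ?_
  rintro _ ⟨w, hw, w', hw', rfl⟩
  have hEMw : T.EM w ∈ T.M := T.hEM_mem w hw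
  have hpull : T.e₂ * (w * T.e₂ * w') = T.EM w * T.e₂ * w' := by
    rw [← mul_assoc, ← mul_assoc, T.he₂we₂ w hw]
  simp only [LinearMap.comp_apply, LinearMap.mulLeft_apply, LinearMap.smul_apply]
  rw [hpull, T.hEM1_bimod _ (T.hMM₁ hEMw) w' hw', T.hEM1e₂, mul_smul_comm, mul_one,
    smul_mul_assoc, mul_smul_comm, ← mul_assoc, T.he₂M _ hEMw]

/-- Through `φ`, the pairing of `A` and `B` reads `⟨a, b⟩ = λ⁻² E_M(a φ(b))`. -/
def phi (x : R) : R := T.EM1 (T.e₂ * T.e₁ * x)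

lemma phi_mem_M₁ (x : R) : T.phi x ∈ T.M₁ := T.hEM1_mem _

lemma phi_mem_A {x : R} (hx : x ∈ T.B) : T.phi x ∈ T.A := by
  refine T.mem_A_iff.2 ⟨T.phi_mem_M₁ x, fun n hn => ?_⟩
  have hnM := T.hNM hn
  have hc : Commute n (T.e₂ * T.e₁ * x) :=
    ((T.commute_e₂ hnM).symm.mul_right (T.commute_e₁ hn).symm).mul_right (hx n hnM)
  show n * T.phi x = T.phi x * n
  rw [phi, ← T.EM1_mul_left (T.hMM₁ hnM), hc.eq, T.EM1_mul_right (T.hMM₁ hnM)]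

lemma e₂_mul_phi (x : R) : T.e₂ * T.phi x = T.lam • (T.e₂ * T.e₁ * x) := by
  rw [phi, mul_assoc T.e₂, T.e₂_mul_EM1_e₂_mul]

lemma e₁_mul_e₂_mul_phi (x : R) : T.e₁ * T.e₂ * T.phi x = T.lam ^ 2 • (T.e₁ * x) := by
  rw [mul_assoc, e₂_mul_phi, mul_smul_comm, ← mul_assoc, ← mul_assoc, T.hbraid₁, smul_mul_assoc,
    smul_smul, sq]

lemma EM1_mul_e₂_mul_e₁_mul {a : R} (ha : a ∈ T.M₁) (x : R) :
    T.EM1 (a * T.e₂ * T.e₁ * x) = a * T.phi x := by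
  rw [phi, ← T.EM1_mul_left ha]
  simp only [mul_assoc]

lemma algebraMap_F_mul_e₂_mul_e₁_mul {a x : R} (ha : a ∈ T.A) (hx : x ∈ T.B) :
    algebraMap k R (T.F (a * T.e₂ * T.e₁ * x)) = T.EM (a * T.phi x) := by
  obtain ⟨ha₁, haN⟩ := T.mem_A_iff.1 ha
  rw [T.hF _ fun n hn => ?_, T.EM1_mul_e₂_mul_e₁_mul ha₁]
  exact (((haN n hn).symm.mul_left (T.commute_e₂ (T.hNM hn))).mul_left (T.commute_e₁ hn)).mul_left
    (T.commute_of_mem_B hx (T.hNM hn)).symm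

lemma sum_xb_mul_e₁_mul {x : R} (hx : x ∈ T.B) (z : R) :
    ∑ p, T.xb p * (T.e₁ * x * (T.yb p * z)) = x * z := by
  calc ∑ p, T.xb p * (T.e₁ * x * (T.yb p * z))
      = (∑ p, T.xb p * T.e₁ * T.yb p) * (x * z) := by
        rw [Finset.sum_mul]
        refine Finset.sum_congr rfl fun p _ => ?_
        simp only [mul_assoc, (T.commute_of_mem_B hx (T.hyb p)).left_comm z]
    _ = x * z := by rw [T.sum_xb_mul_e₁_mul_yb, one_mul]

end JonesProjections

section Comultiplication

/-- `∑ᵢ b₁ i ⊗ b₂ i` represents `Δ b` for the pairing `⟨a, b⟩ = λ⁻² F(a e₂ e₁ b)`. -/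
def IsComulRep (b : R) {m : ℕ} (b₁ b₂ : Fin m → R) : Prop :=
  ∀ a ∈ T.A, ∀ a' ∈ T.A,
    ∑ i, T.F (a * T.e₂ * T.e₁ * b₁ i) * T.F (a' * T.e₂ * T.e₁ * b₂ i) =
      T.lam ^ 2 * T.F (a * a' * T.e₂ * T.e₁ * b)

/-- `E_M` need not be tracial on `A`: this is the element representing `γ ↦ E_M(γ z_d)` under the
pairing `(a, γ) ↦ E_M(a γ)`, expanded in the dual basis `(zᵢ, wᵢ)`. -/
def zbTwist (d : Fin T.r) : R := ∑ i, T.EM (T.zb i * T.zb d) * T.wb i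

lemma zbTwist_mem_A (d : Fin T.r) : T.zbTwist d ∈ T.A :=
  sum_mem fun i _ => mul_mem (T.EM_mem_A (mul_mem (T.zb_mem_A i) (T.zb_mem_A d))) (T.wb_mem_A i)

lemma EM_mul_zb {γ : R} (hγ : γ ∈ T.A) (d : Fin T.r) :
    T.EM (γ * T.zb d) = T.EM (T.zbTwist d * γ) := by
  have hγ₁ := (T.mem_A_iff.1 hγ).1
  conv_lhs => rw [← T.hzw_dual₂ γ hγ₁]
  simp only [zbTwist, Finset.sum_mul, map_sum]
  refine Finset.sum_congr rfl fun i _ => ?_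
  have hwγ : T.wb i * γ ∈ T.A := mul_mem (T.wb_mem_A i) hγ
  have hzz : T.zb i * T.zb d ∈ T.A := mul_mem (T.zb_mem_A i) (T.zb_mem_A d)
  calc T.EM (T.zb i * T.EM (T.wb i * γ) * T.zb d)
      = T.EM (T.EM (T.wb i * γ) * (T.zb i * T.zb d)) := by
        rw [← (T.commute_EM hwγ _).eq, mul_assoc]
    _ = T.EM (T.wb i * γ) * T.EM (T.zb i * T.zb d) :=
        T.EM_mul_left (T.hEM_mem _ (T.mem_A_iff.1 hwγ).1) (T.mem_A_iff.1 hzz).1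
    _ = T.EM (T.EM (T.zb i * T.zb d) * T.wb i * γ) := by
        rw [(T.commute_EM hwγ _).eq, mul_assoc,
          T.EM_mul_left (T.hEM_mem _ (T.mem_A_iff.1 hzz).1) (T.mem_A_iff.1 hwγ).1]

variable {T} {b : R} {m : ℕ} {b₁ b₂ : Fin m → R}

lemma sum_EM_mul_phi_mul_EM_mul_phi (hb : b ∈ T.B) (hb₁ : ∀ i, b₁ i ∈ T.B)
    (hb₂ : ∀ i, b₂ i ∈ T.B) (hΔ : T.IsComulRep b b₁ b₂) {a a' : R} (ha : a ∈ T.A)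
    (ha' : a' ∈ T.A) :
    ∑ i, T.EM (a * T.phi (b₁ i)) * T.EM (a' * T.phi (b₂ i)) =
      T.lam ^ 2 • T.EM (a * a' * T.phi b) := by
  rw [← T.algebraMap_F_mul_e₂_mul_e₁_mul (mul_mem ha ha') hb, Algebra.smul_def, ← map_mul,
    ← hΔ a ha a' ha', map_sum]
  refine Finset.sum_congr rfl fun i _ => ?_
  rw [map_mul (algebraMap k R), T.algebraMap_F_mul_e₂_mul_e₁_mul ha (hb₁ i),
    T.algebraMap_F_mul_e₂_mul_e₁_mul ha' (hb₂ i)]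

lemma sum_phi_mul_EM_phi_mul_zb (hb : b ∈ T.B) (hb₁ : ∀ i, b₁ i ∈ T.B)
    (hb₂ : ∀ i, b₂ i ∈ T.B) (hΔ : T.IsComulRep b b₁ b₂) (d : Fin T.r) :
    ∑ i, T.phi (b₂ i) * T.EM (T.phi (b₁ i) * T.zb d) = T.lam ^ 2 • (T.phi b * T.zb d) := by
  calc ∑ i, T.phi (b₂ i) * T.EM (T.phi (b₁ i) * T.zb d)
      = ∑ i, ∑ c, T.zb c *
          (T.EM (T.zbTwist d * T.phi (b₁ i)) * T.EM (T.wb c * T.phi (b₂ i))) := by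
        refine Finset.sum_congr rfl fun i _ => ?_
        nth_rw 1 [← T.hzw_dual₂ _ (T.phi_mem_M₁ (b₂ i))]
        rw [T.EM_mul_zb (T.phi_mem_A (hb₁ i)), Finset.sum_mul]
        refine Finset.sum_congr rfl fun c _ => ?_
        rw [mul_assoc, (T.commute_EM (mul_mem (T.wb_mem_A c) (T.phi_mem_A (hb₂ i))) _).eq]
    _ = ∑ c, T.zb c * (T.lam ^ 2 • T.EM (T.zbTwist d * T.wb c * T.phi b)) := by
        rw [Finset.sum_comm]
        refine Finset.sum_congr rfl fun c _ => ?_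
        rw [← Finset.mul_sum, sum_EM_mul_phi_mul_EM_mul_phi hb hb₁ hb₂ hΔ (T.zbTwist_mem_A d)
          (T.wb_mem_A c)]
    _ = T.lam ^ 2 • ∑ c, T.zb c * T.EM (T.wb c * (T.phi b * T.zb d)) := by
        rw [Finset.smul_sum]
        refine Finset.sum_congr rfl fun c _ => ?_
        rw [mul_smul_comm, ← mul_assoc, T.EM_mul_zb (mul_mem (T.wb_mem_A c) (T.phi_mem_A hb)),
          mul_assoc]
    _ = T.lam ^ 2 • (T.phi b * T.zb d) := by
        rw [T.hzw_dual₂ _ (mul_mem (T.phi_mem_M₁ b) (T.hzbM₁ d))]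

lemma sum_phi_mul_EM_phi_mul (hb : b ∈ T.B) (hb₁ : ∀ i, b₁ i ∈ T.B)
    (hb₂ : ∀ i, b₂ i ∈ T.B) (hΔ : T.IsComulRep b b₁ b₂) {g : R} (hg : g ∈ T.M₁) :
    ∑ i, T.phi (b₂ i) * T.EM (T.phi (b₁ i) * g) = T.lam ^ 2 • (T.phi b * g) := by
  have hcoeff : ∀ d, T.EM (T.wb d * g) ∈ T.M := fun d => T.hEM_mem _ (mul_mem (T.hwbM₁ d) hg)
  calc ∑ i, T.phi (b₂ i) * T.EM (T.phi (b₁ i) * g)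
      = ∑ d, (∑ i, T.phi (b₂ i) * T.EM (T.phi (b₁ i) * T.zb d)) * T.EM (T.wb d * g) := by
        simp only [Finset.sum_mul]
        rw [Finset.sum_comm]
        refine Finset.sum_congr rfl fun i _ => ?_
        conv_lhs => rw [← T.hzw_dual₂ g hg]
        rw [Finset.mul_sum, map_sum, Finset.mul_sum]
        refine Finset.sum_congr rfl fun d _ => ?_
        rw [← mul_assoc, T.EM_mul_right (hcoeff d)
          (mul_mem (T.phi_mem_M₁ _) (T.hzbM₁ d)), mul_assoc]
    _ = T.lam ^ 2 • (T.phi b * g) := by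
        simp only [sum_phi_mul_EM_phi_mul_zb hb hb₁ hb₂ hΔ, smul_mul_assoc, mul_assoc,
          ← Finset.smul_sum, ← Finset.mul_sum, T.hzw_dual₂ g hg]

end Comultiplication

section SmashRelation

variable {T}

lemma lam_smul_EM1_e₁_mul_mul_e₂ {g : R} (x : R) (hg : g ∈ T.M₁) :
    T.lam • T.EM1 (T.e₁ * x * g * T.e₂) = T.e₁ * T.EM (T.phi x * g) := by
  have hEM : T.e₁ * T.EM (T.phi x * g) ∈ T.M₁ :=
    mul_mem T.he₁ (T.hMM₁ (T.hEM_mem _ (mul_mem (T.phi_mem_M₁ x) hg)))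
  have hpull : T.lam ^ 2 • (T.e₁ * x * g * T.e₂) = T.e₁ * T.EM (T.phi x * g) * T.e₂ := by
    have he₂ := T.he₂we₂ _ (mul_mem (T.phi_mem_M₁ x) hg)
    rw [← smul_mul_assoc, ← smul_mul_assoc, ← T.e₁_mul_e₂_mul_phi]
    simp only [mul_assoc] at he₂ ⊢
    rw [he₂]
  have h := congrArg T.EM1 hpull
  rw [map_smul, T.EM1_mul_left hEM, T.hEM1e₂, mul_smul_comm, mul_one, sq, mul_smul] at h
  exact smul_right_injective R T.hlam h

variable {b : R} {m : ℕ} {b₁ b₂ : Fin m → R}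

lemma sum_EM1_e₁_mul_mul_e₂_mul (hb : b ∈ T.B) (hb₁ : ∀ i, b₁ i ∈ T.B)
    (hb₂ : ∀ i, b₂ i ∈ T.B) (hΔ : T.IsComulRep b b₁ b₂) {g : R} (hg : g ∈ T.M₁) :
    ∑ i, T.EM1 (T.e₁ * b₁ i * g * T.e₂) * b₂ i = T.lam • (T.e₁ * b * g) := by
  refine smul_right_injective R (pow_ne_zero 3 T.hlam) ?_
  calc T.lam ^ 3 • ∑ i, T.EM1 (T.e₁ * b₁ i * g * T.e₂) * b₂ i
      = T.lam ^ 2 • ∑ i, T.e₁ * b₂ i * T.EM (T.phi (b₁ i) * g) := by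
        rw [pow_succ, mul_smul, Finset.smul_sum]
        congr 1
        refine Finset.sum_congr rfl fun i _ => ?_
        rw [← smul_mul_assoc, lam_smul_EM1_e₁_mul_mul_e₂ (b₁ i) hg, mul_assoc, mul_assoc,
          (T.commute_of_mem_B (hb₂ i) (T.hEM_mem _ (mul_mem (T.phi_mem_M₁ _) hg))).eq]
    _ = T.e₁ * T.e₂ * ∑ i, T.phi (b₂ i) * T.EM (T.phi (b₁ i) * g) := by
        rw [Finset.smul_sum, Finset.mul_sum]
        refine Finset.sum_congr rfl fun i _ => ?_
        rw [← smul_mul_assoc, ← T.e₁_mul_e₂_mul_phi, mul_assoc]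
    _ = T.lam ^ 3 • T.lam • (T.e₁ * b * g) := by
        rw [sum_phi_mul_EM_phi_mul hb hb₁ hb₂ hΔ hg, mul_smul_comm, ← mul_assoc,
          T.e₁_mul_e₂_mul_phi, smul_mul_assoc, smul_smul, smul_smul]
        ring_nf

theorem lam_smul_mul_eq_sum_EM1 (hb : b ∈ T.B) (hb₁ : ∀ i, b₁ i ∈ T.B)
    (hb₂ : ∀ i, b₂ i ∈ T.B) (hΔ : T.IsComulRep b b₁ b₂) {y : R} (hy : y ∈ T.M₁) :
    T.lam • (b * y) = ∑ i, T.EM1 (b₁ i * y * T.e₂) * b₂ i := by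
  calc T.lam • (b * y) = T.lam • ∑ p, T.xb p * (T.e₁ * b * (T.yb p * y)) := by
        rw [T.sum_xb_mul_e₁_mul hb]
    _ = ∑ p, T.xb p * ∑ i, T.EM1 (T.e₁ * b₁ i * (T.yb p * y) * T.e₂) * b₂ i := by
        simp only [Finset.smul_sum, mul_smul_comm,
          sum_EM1_e₁_mul_mul_e₂_mul hb hb₁ hb₂ hΔ (mul_mem (T.hMM₁ (T.hyb _)) hy)]
    _ = ∑ i, T.EM1 (b₁ i * y * T.e₂) * b₂ i := by
        simp only [Finset.mul_sum]
        rw [Finset.sum_comm]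
        refine Finset.sum_congr rfl fun i _ => ?_
        rw [← T.sum_xb_mul_e₁_mul (hb₁ i) y, Finset.sum_mul, map_sum, Finset.sum_mul]
        refine Finset.sum_congr rfl fun p _ => ?_
        rw [mul_assoc (T.xb p), T.EM1_mul_left (T.hMM₁ (T.hxb p)), ← mul_assoc]

end SmashRelation

section MulMap

local notation "M₁⊗B" => Subalgebra.toSubmodule T.M₁ ⊗[k] Subalgebra.toSubmodule T.B

noncomputable def mulMapInv : R →ₗ[k] M₁⊗B :=
  ∑ j, (TensorProduct.mk k _ _).flip ⟨T.vb j, T.vb_mem_B j⟩ ∘ₗ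
    (T.EM1 ∘ₗ LinearMap.mulRight k (T.ub j)).codRestrict _ fun _ => T.hEM1_mem _

lemma mulMapInv_apply (x : R) :
    T.mulMapInv x = ∑ j, (⟨T.EM1 (x * T.ub j), T.hEM1_mem _⟩ : Subalgebra.toSubmodule T.M₁) ⊗ₜ
      (⟨T.vb j, T.vb_mem_B j⟩ : Subalgebra.toSubmodule T.B) := by
  simp only [mulMapInv, LinearMap.sum_apply]
  rfl

lemma mulMap_mulMapInv (x : R) :
    (Subalgebra.toSubmodule T.M₁).mulMap (Subalgebra.toSubmodule T.B) (T.mulMapInv x) = x := by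
  simp only [mulMapInv_apply, map_sum, Submodule.mulMap_tmul, T.huv_dual₁]

lemma mulMapInv_mulMap (t : M₁⊗B) :
    T.mulMapInv ((Subalgebra.toSubmodule T.M₁).mulMap (Subalgebra.toSubmodule T.B) t) = t := by
  induction t using TensorProduct.induction_on with
  | zero => simp
  | add p q hp hq => rw [map_add, map_add, hp, hq]
  | tmul x y =>
    obtain ⟨x, hx⟩ := x
    obtain ⟨y, hy⟩ := y
    choose μ hμ using fun j => T.exists_EM1_eq_algebraMap (mul_mem hy (T.ub_mem_B j))
    have hcoeff (j : Fin T.s) :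
        (⟨T.EM1 (x * y * T.ub j), T.hEM1_mem _⟩ : Subalgebra.toSubmodule T.M₁) = μ j • ⟨x, hx⟩ :=
      Subtype.ext <| show T.EM1 (x * y * T.ub j) = μ j • x by
        rw [mul_assoc, T.EM1_mul_left hx, hμ j, ← Algebra.commutes,
          Algebra.smul_def]
    have hy_eq : ∑ j, μ j • (⟨T.vb j, T.vb_mem_B j⟩ : Subalgebra.toSubmodule T.B) = ⟨y, hy⟩ :=
      Subtype.ext <| by
        simp only [AddSubmonoidClass.coe_finsetSum, SetLike.val_smul, Algebra.smul_def, ← hμ]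
        exact T.huv_dual₁ y
    rw [Submodule.mulMap_tmul, mulMapInv_apply]
    simp only [hcoeff, TensorProduct.smul_tmul, ← TensorProduct.tmul_sum, hy_eq]

theorem mulMap_bijective :
    Function.Bijective ((Subalgebra.toSubmodule T.M₁).mulMap (Subalgebra.toSubmodule T.B)) :=
  ⟨Function.LeftInverse.injective T.mulMapInv_mulMap,
    Function.RightInverse.surjective T.mulMap_mulMapInv⟩

end MulMap

end JonesTower

theorem smash_product_relation_general (T : JonesTower k R)
    (b : R) (hb : b ∈ T.B) (m : ℕ) (b₁ b₂ : Fin m → R)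
    (hb₁ : ∀ i, b₁ i ∈ T.B) (hb₂ : ∀ i, b₂ i ∈ T.B)
    (hΔ : ∀ a ∈ T.A, ∀ a' ∈ T.A,
      ∑ i, T.F (a * T.e₂ * T.e₁ * b₁ i) * T.F (a' * T.e₂ * T.e₁ * b₂ i) =
        T.lam ^ 2 * T.F (a * a' * T.e₂ * T.e₁ * b)) :
    (∀ y ∈ T.M₁, b * y = T.lam⁻¹ • ∑ i, T.EM1 (b₁ i * y * T.e₂) * b₂ i) ∧
    Function.Injective
      ((Subalgebra.toSubmodule T.M₁).mulMap (Subalgebra.toSubmodule T.B)) ∧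
    LinearMap.range
      ((Subalgebra.toSubmodule T.M₁).mulMap (Subalgebra.toSubmodule T.B)) = ⊤ := by
  refine ⟨fun y hy => ?_, T.mulMap_bijective.1, LinearMap.range_eq_top.2 T.mulMap_bijective.2⟩
  rw [← JonesTower.lam_smul_mul_eq_sum_EM1 hb hb₁ hb₂ hΔ hy, inv_smul_smul₀ T.hlam]

/-- **Smash product relation for `M₂`.** If `b ∈ B` and `∑ᵢ b₁⁽ⁱ⁾ ⊗ b₂⁽ⁱ⁾`
represents the comultiplication `Δ(b)` determined by the pairing
`⟨a, b⟩ = λ⁻² F(a e₂ e₁ b)`, then `b y = ∑ᵢ (b₁⁽ⁱ⁾ ⊳ y) b₂⁽ⁱ⁾` for every `y ∈ M₁`,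
where `b ⊳ y = λ⁻¹ E_{M₁}(b y e₂)` is the Ocneanu–Szymański action. Together with
the bijectivity of the multiplication map `M₁ ⊗ₖ B → M₂`, this says that `M₂` is
the smash product `M₁ # B` via `x ⊗ b ↦ xb`. -/
theorem smash_product_relation (T : JonesTower k R) [Nontrivial R]
    (b : R) (hb : b ∈ T.B) (m : ℕ) (b₁ b₂ : Fin m → R)
    (hb₁ : ∀ i, b₁ i ∈ T.B) (hb₂ : ∀ i, b₂ i ∈ T.B)
    (hΔ : ∀ a ∈ T.A, ∀ a' ∈ T.A,
      ∑ i, T.F (a * T.e₂ * T.e₁ * b₁ i) * T.F (a' * T.e₂ * T.e₁ * b₂ i) =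
        T.lam ^ 2 * T.F (a * a' * T.e₂ * T.e₁ * b)) :
    (∀ y ∈ T.M₁, b * y = T.lam⁻¹ • ∑ i, T.EM1 (b₁ i * y * T.e₂) * b₂ i) ∧
    Function.Injective
      ((Subalgebra.toSubmodule T.M₁).mulMap (Subalgebra.toSubmodule T.B)) ∧
    LinearMap.range
      ((Subalgebra.toSubmodule T.M₁).mulMap (Subalgebra.toSubmodule T.B)) = ⊤ :=
  smash_product_relation_general T b hb m b₁ b₂ hb₁ hb₂ hΔ
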